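/- arXiv:2211.08858 — 2 statements merged into one kernel-verified Lean document; each statement's English description precedes it below -/
import Mathlib

section
/- If C ≤ min_{x≠x'} d(x,x'), then for all μ,ν ∈ M_+(X), KR_{p,C}^p(μ,ν) = (C^p/2) · TV(μ,ν). -/
open scoped BigOperators
open MeasureTheory ProbabilityTheory

/-- The `(p,C)`-Kantorovich-Rubinstein cost (the `p`-th power of the KR distance)
between finitely supported nonnegative measures, as an infimum over sub-couplings. -/
noncomputable def KRcost {X : Type*} [Fintype X] (d : X → X → ℝ) (p C : ℝ)
    (μ ν : X → ℝ) : ℝ :=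
  sInf { c : ℝ | ∃ π : X → X → ℝ, (∀ x y, 0 ≤ π x y) ∧
    (∀ x, (∑ y, π x y) ≤ μ x) ∧ (∀ y, (∑ x, π x y) ≤ ν y) ∧
    c = (∑ x, ∑ y, d x y ^ p * π x y)
      + C ^ p * ((∑ x, μ x + ∑ x, ν x) / 2 - ∑ x, ∑ y, π x y) }

/-- Total variation distance between finitely supported measures. -/
noncomputable def TV {X : Type*} [Fintype X] (μ ν : X → ℝ) : ℝ :=
  ∑ x, |μ x - ν x|

lemma abs_sub_eq_add_sub_two_min (a b : ℝ) : |a - b| = a + b - 2 * min a b := by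
  rcases le_total a b with h | h
  · rw [abs_of_nonpos (by linarith), min_eq_left h]; ring
  · rw [abs_of_nonneg (by linarith), min_eq_right h]; ring

theorem kr_eq_tv_of_small_C {X : Type*} [Fintype X] [MetricSpace X]
    (p C : ℝ) (hp : 1 ≤ p) (hC : 0 < C)
    (hCsmall : ∀ x y : X, x ≠ y → C ≤ dist x y)
    (μ ν : X → ℝ) (hμ : ∀ x, 0 ≤ μ x) (hν : ∀ x, 0 ≤ ν x) :
    KRcost dist p C μ ν = C ^ p / 2 * TV μ ν := by
  classical
  have hp0 : p ≠ 0 := by intro h; rw [h] at hp; linarith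
  have hCp : (0:ℝ) < C ^ p := Real.rpow_pos_of_pos hC p
  have hTV : TV μ ν = ∑ x, μ x + ∑ x, ν x - 2 * ∑ x, min (μ x) (ν x) := by
    unfold TV
    simp_rw [abs_sub_eq_add_sub_two_min]
    rw [Finset.sum_sub_distrib, Finset.sum_add_distrib, Finset.mul_sum]
  -- lower bound
  have key : ∀ c ∈ { c : ℝ | ∃ π : X → X → ℝ, (∀ x y, 0 ≤ π x y) ∧
      (∀ x, (∑ y, π x y) ≤ μ x) ∧ (∀ y, (∑ x, π x y) ≤ ν y) ∧
      c = (∑ x, ∑ y, dist x y ^ p * π x y)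
        + C ^ p * ((∑ x, μ x + ∑ x, ν x) / 2 - ∑ x, ∑ y, π x y) },
      C ^ p / 2 * TV μ ν ≤ c := by
    rintro c ⟨π, hπ0, hrow, hcol, rfl⟩
    have hdiag : ∀ x, π x x ≤ min (μ x) (ν x) := by
      intro x
      refine le_min ?_ ?_
      · exact le_trans (Finset.single_le_sum (fun y _ => hπ0 x y) (Finset.mem_univ x)) (hrow x)
      · exact le_trans (Finset.single_le_sum (fun y _ => hπ0 y x) (Finset.mem_univ x)) (hcol x)
    have h1 : ∀ x y : X, (if x = y then 0 else C ^ p * π x y) ≤ dist x y ^ p * π x y := by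
      intro x y
      by_cases h : x = y
      · subst h
        simp only [if_pos rfl]
        exact mul_nonneg (Real.rpow_nonneg dist_nonneg p) (hπ0 x x)
      · simp only [h, if_neg, if_false]
        exact mul_le_mul_of_nonneg_right
          (Real.rpow_le_rpow hC.le (hCsmall x y h) (by linarith)) (hπ0 x y)
    have hsum : ∀ x : X, (∑ y, (if x = y then 0 else C ^ p * π x y))
        = C ^ p * (∑ y, π x y) - C ^ p * π x x := by
      intro x
      have heq : ∀ y : X, (if x = y then 0 else C ^ p * π x y)
          = C ^ p * π x y - (if x = y then C ^ p * π x y else 0) := by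
        intro y; by_cases h : x = y <;> simp [h]
      simp_rw [heq]
      rw [Finset.sum_sub_distrib, Finset.mul_sum, Finset.sum_ite_eq]
      simp
    have hA : C ^ p * ((∑ x, ∑ y, π x y) - ∑ x, π x x)
        ≤ ∑ x, ∑ y, dist x y ^ p * π x y := by
      calc C ^ p * ((∑ x, ∑ y, π x y) - ∑ x, π x x)
          = ∑ x, (C ^ p * (∑ y, π x y) - C ^ p * π x x) := by
            rw [mul_sub, Finset.mul_sum, Finset.mul_sum, Finset.sum_sub_distrib]
        _ = ∑ x, ∑ y, (if x = y then 0 else C ^ p * π x y) := by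
            exact (Finset.sum_congr rfl fun x _ => (hsum x).symm)
        _ ≤ ∑ x, ∑ y, dist x y ^ p * π x y :=
            Finset.sum_le_sum fun x _ => Finset.sum_le_sum fun y _ => h1 x y
    have hmin : ∑ x, π x x ≤ ∑ x, min (μ x) (ν x) :=
      Finset.sum_le_sum fun x _ => hdiag x
    have h2 : C ^ p * (∑ x, π x x) ≤ C ^ p * ∑ x, min (μ x) (ν x) :=
      mul_le_mul_of_nonneg_left hmin hCp.le
    rw [hTV]
    nlinarith [hA, h2]
  -- membership of the target
  have mem : C ^ p / 2 * TV μ ν ∈ { c : ℝ | ∃ π : X → X → ℝ, (∀ x y, 0 ≤ π x y) ∧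
      (∀ x, (∑ y, π x y) ≤ μ x) ∧ (∀ y, (∑ x, π x y) ≤ ν y) ∧
      c = (∑ x, ∑ y, dist x y ^ p * π x y)
        + C ^ p * ((∑ x, μ x + ∑ x, ν x) / 2 - ∑ x, ∑ y, π x y) } := by
    refine ⟨fun x y => if x = y then min (μ x) (ν x) else 0, ?_, ?_, ?_, ?_⟩
    · intro x y
      by_cases h : x = y <;> simp [h, le_min_iff, hμ, hν]
    · intro x
      simp [Finset.sum_ite_eq, min_le_left]
    · intro y
      simp [Finset.sum_ite_eq', min_le_right]
    · have hfirst : (∑ x, ∑ y, dist x y ^ p *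
          (if x = y then min (μ x) (ν x) else 0)) = 0 := by
        apply Finset.sum_eq_zero
        intro x _
        apply Finset.sum_eq_zero
        intro y _
        by_cases h : x = y
        · subst h; simp [Real.zero_rpow hp0]
        · simp [h]
      have hsecond : (∑ x : X, ∑ y, (if x = y then min (μ x) (ν x) else 0))
          = ∑ x, min (μ x) (ν x) := by
        apply Finset.sum_congr rfl
        intro x _
        simp [Finset.sum_ite_eq]
      rw [hfirst, hsecond, hTV]
      ring
  unfold KRcost
  exact le_antisymm (csInf_le ⟨_, key⟩ mem) (le_csInf ⟨_, mem⟩ key)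
end

section
/- For the estimator μ̂_{t,s}(x) = B_x P_x/(st) with independent B_x ~ Ber(s) and P_x ~ Poi(tμ(x)), the expected total variation distance satisfies E[TV(μ̂_{t,s}, μ)] ≤ 2(1−s)M(μ) + (s/√t)·Σ_{x∈X} √(μ(x)). -/
open scoped BigOperators
open MeasureTheory ProbabilityTheory

/-!
Fix a site `x`, put `b = B x`, `m = μ x` and `q = P x / t`, so that `E q = m`. Since `b ∈ {0, 1}`,
`|b q / s - m| = (1 - b) m + b |q / s - m|`, and independence gives
`E |b q / s - m| = (1 - s) m + s E |q / s - m|`. Writing `s (q / s - m) = (1 - s) q + s (q - m)`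
with `q ≥ 0` bounds the last term by `(1 - s) m + s E |q - m|`. Finally, for `N ~ Poisson(r)`,
AM-GM gives `|N - r| ≤ ((N - r) ^ 2 + r) / (2 √r)`, and `Var N = r` turns this into
`E |N - r| ≤ √r`, i.e. `E |q - m| ≤ √m / √t`. Summing over the sites gives the bound.
-/

namespace ProbabilityTheory

open Real
open scoped NNReal Nat

lemma poisson_weight_succ_mul (r : ℝ≥0) (n : ℕ) :
    exp (-r) * r ^ (n + 1) / (n + 1)! * (n + 1 : ℕ) = r * (exp (-r) * r ^ n / n !) := by
  simp only [Nat.factorial_succ, Nat.cast_mul, pow_succ]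
  field_simp

/-- Stein's identity `E[N g(N)] = r E[g(N + 1)]` for `N ~ Poisson(r)`. -/
lemma hasSum_poisson_weight_mul_cast_mul {r : ℝ≥0} {g : ℕ → ℝ} {a : ℝ}
    (h : HasSum (fun n ↦ exp (-r) * r ^ n / n ! * g (n + 1)) a) :
    HasSum (fun n ↦ exp (-r) * r ^ n / n ! * (n * g n)) (r * a) := by
  refine (hasSum_nat_add_iff' 1).mp ?_
  simp only [Finset.range_one, Finset.sum_singleton, Nat.cast_zero, zero_mul, mul_zero, sub_zero]
  refine (h.mul_left (r : ℝ)).congr_fun fun n ↦ ?_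
  rw [← mul_assoc, poisson_weight_succ_mul, mul_assoc]

lemma hasSum_poisson_weight_mul_cast (r : ℝ≥0) :
    HasSum (fun n ↦ exp (-r) * r ^ n / n ! * n) r := by
  simpa using hasSum_poisson_weight_mul_cast_mul (g := fun _ ↦ 1) (a := 1)
    (by simpa using hasSum_one_poissonMeasure r)

lemma hasSum_poisson_weight_mul_cast_sub_sq (r : ℝ≥0) :
    HasSum (fun n ↦ exp (-r) * r ^ n / n ! * (n - r) ^ 2) r := by
  have hsq : HasSum (fun n ↦ exp (-r) * r ^ n / n ! * (n * n)) (r * (r + 1)) :=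
    hasSum_poisson_weight_mul_cast_mul <| by
      simpa [mul_add] using (hasSum_poisson_weight_mul_cast r).add (hasSum_one_poissonMeasure r)
  have h : HasSum (fun n ↦ exp (-r) * r ^ n / n ! * (n - r) ^ 2)
      (r * (r + 1) - 2 * r * r + r ^ 2 * 1) :=
    ((hsq.sub ((hasSum_poisson_weight_mul_cast r).mul_left (2 * (r : ℝ)))).add
      ((hasSum_one_poissonMeasure r).mul_left ((r : ℝ) ^ 2))).congr_fun fun n ↦ by ring
  rwa [show (r : ℝ) * (r + 1) - 2 * r * r + r ^ 2 * 1 = r by ring] at h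

lemma integrable_cast_poissonMeasure (r : ℝ≥0) : Integrable (fun n : ℕ ↦ (n : ℝ)) Po(r) := by
  rw [integrable_poissonMeasure_iff]
  simpa using (hasSum_poisson_weight_mul_cast r).summable

lemma integral_cast_poissonMeasure (r : ℝ≥0) : ∫ n, (n : ℝ) ∂Po(r) = r := by
  rw [integral_poissonMeasure]
  exact (hasSum_poisson_weight_mul_cast r).tsum_eq

lemma integral_abs_cast_sub_le_sqrt_poissonMeasure (r : ℝ≥0) :
    ∫ n, |(n : ℝ) - r| ∂Po(r) ≤ √r := by
  rcases eq_zero_or_pos r with rfl | hr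
  · simp only [NNReal.coe_zero, sub_zero, Nat.abs_cast, integral_cast_poissonMeasure, sqrt_zero,
      le_refl]
  have hamgm (z : ℝ) : |z| ≤ (z ^ 2 + r) / (2 * √r) := by
    rw [le_div_iff₀ (by positivity)]
    nlinarith [sq_nonneg (|z| - √r), sq_sqrt r.coe_nonneg, sq_abs z]
  have hbound : HasSum (fun n : ℕ ↦ exp (-r) * r ^ n / n ! * (((n - r) ^ 2 + r) / (2 * √r)))
      √r := by
    have hsqrt := sqrt_pos.mpr hr
    have h : HasSum (fun n : ℕ ↦ exp (-r) * r ^ n / n ! * (((n - r) ^ 2 + r) / (2 * √r)))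
        ((r + r * 1) / (2 * √r)) :=
      (((hasSum_poisson_weight_mul_cast_sub_sq r).add
        ((hasSum_one_poissonMeasure r).mul_left (r : ℝ))).div_const (2 * √r)).congr_fun
        fun n ↦ by ring
    rwa [show ((r : ℝ) + r * 1) / (2 * √r) = √r by
      field_simp; rw [sq_sqrt r.coe_nonneg]; ring] at h
  have hle (n : ℕ) : exp (-r) * r ^ n / n ! * |(n : ℝ) - r|
      ≤ exp (-r) * r ^ n / n ! * (((n - r) ^ 2 + r) / (2 * √r)) :=
    mul_le_mul_of_nonneg_left (hamgm _) (by positivity)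
  rw [integral_poissonMeasure]
  exact hasSum_le hle (hbound.summable.of_nonneg_of_le (fun n ↦ by positivity) hle).hasSum hbound

variable {Ω : Type*} [MeasurableSpace Ω] {Pr : Measure Ω}

lemma exists_hasLaw_poissonMeasure_of_measure_eq {p : Ω → ℝ} (hp : Measurable p)
    (hnat : ∀ ω, ∃ n : ℕ, p ω = n) {r : ℝ≥0}
    (hdist : ∀ n : ℕ, Pr {ω | p ω = n} = ENNReal.ofReal (exp (-r) * r ^ n / n !)) :
    ∃ q : Ω → ℕ, HasLaw q Po(r) Pr ∧ p = fun ω ↦ (q ω : ℝ) := by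
  have hfloor (ω : Ω) : p ω = ⌊p ω⌋₊ := by
    obtain ⟨n, hn⟩ := hnat ω
    rw [hn, Nat.floor_natCast]
  refine ⟨fun ω ↦ ⌊p ω⌋₊, ⟨hp.nat_floor.aemeasurable, ?_⟩, funext hfloor⟩
  refine Measure.ext_of_singleton fun n ↦ ?_
  rw [Measure.map_apply hp.nat_floor (measurableSet_singleton n), poissonMeasure_singleton,
    ← hdist n]
  congr 1
  ext ω
  obtain ⟨k, hk⟩ := hnat ω
  simp [hk]

lemma HasLaw.integrable_cast_poisson {q : Ω → ℕ} {r : ℝ≥0} (hq : HasLaw q Po(r) Pr) :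
    Integrable (fun ω ↦ (q ω : ℝ)) Pr :=
  (integrable_map_measure .of_discrete hq.aemeasurable).mp
    (hq.map_eq ▸ integrable_cast_poissonMeasure r)

lemma HasLaw.integral_cast_poisson {q : Ω → ℕ} {r : ℝ≥0} (hq : HasLaw q Po(r) Pr) :
    ∫ ω, (q ω : ℝ) ∂Pr = r :=
  (hq.integral_comp (f := fun n : ℕ ↦ (n : ℝ)) .of_discrete).trans
    (integral_cast_poissonMeasure r)

lemma HasLaw.integral_abs_cast_sub_le_sqrt_poisson {q : Ω → ℕ} {r : ℝ≥0}
    (hq : HasLaw q Po(r) Pr) : ∫ ω, |(q ω : ℝ) - r| ∂Pr ≤ √r :=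
  (hq.integral_comp (f := fun n : ℕ ↦ |(n : ℝ) - r|) .of_discrete).trans_le
    (integral_abs_cast_sub_le_sqrt_poissonMeasure r)

lemma ae_eq_zero_or_eq_one_of_measure_eq [IsProbabilityMeasure Pr] {b : Ω → ℝ}
    (hb : Measurable b) {s : ℝ} (hs0 : 0 ≤ s) (hs1 : s ≤ 1)
    (h1 : Pr {ω | b ω = 1} = ENNReal.ofReal s) (h0 : Pr {ω | b ω = 0} = ENNReal.ofReal (1 - s)) :
    ∀ᵐ ω ∂Pr, b ω = 0 ∨ b ω = 1 := by
  have hm0 : MeasurableSet {ω | b ω = 0} := hb (measurableSet_singleton 0)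
  have hm1 : MeasurableSet {ω | b ω = 1} := hb (measurableSet_singleton 1)
  have hdisj : Disjoint {ω | b ω = 0} {ω | b ω = 1} :=
    Set.disjoint_left.mpr fun ω h0 h1 ↦ zero_ne_one (h0.symm.trans h1)
  rw [ae_iff_measure_eq (Set.ofPred_or ▸ (hm0.union hm1).nullMeasurableSet), Set.ofPred_or,
    measure_union hdisj hm1, h0, h1, ← ENNReal.ofReal_add (by linarith) hs0, measure_univ]
  simp

lemma integral_eq_measureReal_of_ae_eq_zero_or_eq_one {b : Ω → ℝ} (hb : Measurable b)
    (h01 : ∀ᵐ ω ∂Pr, b ω = 0 ∨ b ω = 1) : ∫ ω, b ω ∂Pr = Pr.real {ω | b ω = 1} := by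
  rw [← integral_indicator_one (s := {ω | b ω = 1}) (hb (measurableSet_singleton 1))]
  refine integral_congr_ae (h01.mono fun ω hω ↦ ?_)
  rcases hω with h | h <;> simp [Set.indicator, h]

lemma integral_abs_mul_sub_of_indepFun [IsProbabilityMeasure Pr] {b y : Ω → ℝ} {m : ℝ}
    (hm : 0 ≤ m) (hb : Measurable b) (h01 : ∀ᵐ ω ∂Pr, b ω = 0 ∨ b ω = 1) (hy : Integrable y Pr)
    (hind : IndepFun b y Pr) :
    ∫ ω, |b ω * y ω - m| ∂Pr = (1 - ∫ ω, b ω ∂Pr) * m + (∫ ω, b ω ∂Pr) * ∫ ω, |y ω - m| ∂Pr := by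
  have hbint : Integrable b Pr := Integrable.of_bound hb.aestronglyMeasurable 1 <|
    h01.mono fun ω h ↦ by rcases h with h | h <;> simp [h]
  have hind' : IndepFun b (fun ω ↦ |y ω - m|) Pr :=
    hind.comp measurable_id (measurable_id.sub_const m).abs
  have hdev : Integrable (fun ω ↦ |y ω - m|) Pr := (hy.sub (integrable_const m)).abs
  have hint₁ : Integrable (fun ω ↦ (1 - b ω) * m) Pr :=
    ((integrable_const 1).sub hbint).mul_const m
  have hint₂ : Integrable (fun ω ↦ b ω * |y ω - m|) Pr := hind'.integrable_mul hbint hdev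
  calc ∫ ω, |b ω * y ω - m| ∂Pr = ∫ ω, ((1 - b ω) * m + b ω * |y ω - m|) ∂Pr :=
        integral_congr_ae <| h01.mono fun ω h ↦ by
          rcases h with h | h <;> simp [h, abs_of_nonneg hm]
    _ = (1 - ∫ ω, b ω ∂Pr) * m + (∫ ω, b ω ∂Pr) * ∫ ω, |y ω - m| ∂Pr := by
      rw [integral_add hint₁ hint₂, integral_mul_const, integral_sub (integrable_const 1) hbint,
        hind'.integral_fun_mul_eq_mul_integral hb.aestronglyMeasurable hdev.aestronglyMeasurable]
      simp

lemma integral_abs_mul_div_sub_le_of_indepFun [IsProbabilityMeasure Pr] {b q : Ω → ℝ}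
    {s m : ℝ} (hs1 : s ≤ 1) (hm : 0 ≤ m) (hb : Measurable b) (h01 : ∀ᵐ ω ∂Pr, b ω = 0 ∨ b ω = 1)
    (hbs : ∫ ω, b ω ∂Pr = s) (hq0 : ∀ ω, 0 ≤ q ω) (hq : Integrable q Pr) (hqm : ∫ ω, q ω ∂Pr = m)
    (hind : IndepFun b q Pr) :
    ∫ ω, |b ω * q ω / s - m| ∂Pr ≤ 2 * (1 - s) * m + s * ∫ ω, |q ω - m| ∂Pr := by
  have hs0 : 0 ≤ s := hbs ▸ integral_nonneg_of_ae (h01.mono fun ω h ↦ by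
    rcases h with h | h <;> simp [h])
  have hsplit := integral_abs_mul_sub_of_indepFun hm hb h01 (hq.div_const s)
    (hind.comp measurable_id (measurable_id.div_const s))
  simp only [hbs, ← mul_div_assoc] at hsplit
  rw [hsplit]
  suffices s * ∫ ω, |q ω / s - m| ∂Pr ≤ (1 - s) * m + s * ∫ ω, |q ω - m| ∂Pr by linarith
  rcases hs0.eq_or_lt with rfl | hs
  · simpa using hm
  have hdev : Integrable (fun ω ↦ |q ω - m|) Pr := (hq.sub (integrable_const m)).abs
  calc s * ∫ ω, |q ω / s - m| ∂Pr = ∫ ω, |(1 - s) * q ω + s * (q ω - m)| ∂Pr := by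
        rw [← integral_const_mul]
        congr 1 with ω
        rw [show (1 - s) * q ω + s * (q ω - m) = s * (q ω / s - m) by field_simp; ring,
          abs_mul, abs_of_pos hs]
    _ ≤ ∫ ω, ((1 - s) * q ω + s * |q ω - m|) ∂Pr := by
        refine integral_mono_of_nonneg (ae_of_all _ fun ω ↦ abs_nonneg _)
          ((hq.const_mul _).add (hdev.const_mul _)) (ae_of_all _ fun ω ↦ ?_)
        calc |(1 - s) * q ω + s * (q ω - m)|
            ≤ |(1 - s) * q ω| + |s * (q ω - m)| := abs_add_le _ _
          _ = (1 - s) * q ω + s * |q ω - m| := by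
            rw [abs_mul, abs_mul, abs_of_nonneg (by linarith), abs_of_nonneg (hq0 ω),
              abs_of_nonneg hs0]
    _ = (1 - s) * m + s * ∫ ω, |q ω - m| ∂Pr := by
        rw [integral_add (hq.const_mul _) (hdev.const_mul _), integral_const_mul,
          integral_const_mul, hqm]

lemma integral_abs_bernoulli_mul_poisson_div_sub_le [IsProbabilityMeasure Pr] {b p : Ω → ℝ}
    {m t s : ℝ} (hm : 0 ≤ m) (ht : 0 < t) (hs0 : 0 ≤ s) (hs1 : s ≤ 1) (hb : Measurable b)
    (hb1 : Pr {ω | b ω = 1} = ENNReal.ofReal s) (hb0 : Pr {ω | b ω = 0} = ENNReal.ofReal (1 - s))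
    (hp : Measurable p) (hpnat : ∀ ω, ∃ n : ℕ, p ω = n)
    (hpdist : ∀ n : ℕ, Pr {ω | p ω = n} = ENNReal.ofReal (exp (-(t * m)) * (t * m) ^ n / n !))
    (hind : IndepFun b p Pr) :
    ∫ ω, |b ω * p ω / (s * t) - m| ∂Pr ≤ 2 * (1 - s) * m + s / √t * √m := by
  let r : ℝ≥0 := ⟨t * m, by positivity⟩
  have hr : (r : ℝ) = t * m := rfl
  obtain ⟨q, hq, rfl⟩ := exists_hasLaw_poissonMeasure_of_measure_eq (r := r) hp hpnat hpdist
  have h01 := ae_eq_zero_or_eq_one_of_measure_eq hb hs0 hs1 hb1 hb0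
  have hbs : ∫ ω, b ω ∂Pr = s := by
    rw [integral_eq_measureReal_of_ae_eq_zero_or_eq_one hb h01, measureReal_def, hb1,
      ENNReal.toReal_ofReal hs0]
  have hdev : ∫ ω, |(q ω : ℝ) / t - m| ∂Pr ≤ √m / √t :=
    calc ∫ ω, |(q ω : ℝ) / t - m| ∂Pr = (∫ ω, |(q ω : ℝ) - t * m| ∂Pr) / t := by
          rw [← integral_div]
          congr 1 with ω
          rw [show (q ω : ℝ) / t - m = (q ω - t * m) / t by field_simp, abs_div, abs_of_pos ht]
      _ ≤ √(t * m) / t := by gcongr; exact hr ▸ hq.integral_abs_cast_sub_le_sqrt_poisson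
      _ = √m / √t := by
          rw [sqrt_mul ht.le, div_eq_div_iff ht.ne' (sqrt_pos.mpr ht).ne']
          linear_combination √m * sq_sqrt ht.le
  calc ∫ ω, |b ω * q ω / (s * t) - m| ∂Pr = ∫ ω, |b ω * (q ω / t) / s - m| ∂Pr := by
        congr 1 with ω
        ring_nf
    _ ≤ 2 * (1 - s) * m + s * ∫ ω, |(q ω : ℝ) / t - m| ∂Pr :=
        integral_abs_mul_div_sub_le_of_indepFun hs1 hm hb h01 hbs (fun ω ↦ by positivity)
          (hq.integrable_cast_poisson.div_const t)
          (by rw [integral_div, hq.integral_cast_poisson, hr]; field_simp)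
          (hind.comp measurable_id (measurable_id.div_const t))
    _ ≤ 2 * (1 - s) * m + s * (√m / √t) := by gcongr
    _ = 2 * (1 - s) * m + s / √t * √m := by ring

end ProbabilityTheory

theorem poisson_model_tv_bound {X : Type*} [Fintype X]
    {Ω : Type*} [MeasurableSpace Ω] (Pr : Measure Ω) [IsProbabilityMeasure Pr]
    (μ : X → ℝ) (hμ : ∀ x, 0 ≤ μ x)
    (t s : ℝ) (ht : 0 < t) (hs0 : 0 ≤ s) (hs1 : s ≤ 1)
    (B P : X → Ω → ℝ)
    (hBmeas : ∀ x, Measurable (B x)) (hPmeas : ∀ x, Measurable (P x))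
    (hB1 : ∀ x, Pr {ω | B x ω = 1} = ENNReal.ofReal s)
    (hB0 : ∀ x, Pr {ω | B x ω = 0} = ENNReal.ofReal (1 - s))
    (hPnat : ∀ x ω, ∃ n : ℕ, P x ω = n)
    (hPdist : ∀ x, ∀ n : ℕ, Pr {ω | P x ω = n}
      = ENNReal.ofReal (Real.exp (-(t * μ x)) * (t * μ x) ^ n / n.factorial))
    (hindep : iIndepFun (Sum.elim B P) Pr)
    (hInt : ∀ x, Integrable (fun ω => B x ω * P x ω) Pr) :
    (∫ ω, ∑ x, |B x ω * P x ω / (s * t) - μ x| ∂Pr)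
      ≤ 2 * (1 - s) * (∑ x, μ x) + s / Real.sqrt t * ∑ x, Real.sqrt (μ x) := by
  have hsite (x : X) : ∫ ω, |B x ω * P x ω / (s * t) - μ x| ∂Pr
      ≤ 2 * (1 - s) * μ x + s / √t * √(μ x) :=
    integral_abs_bernoulli_mul_poisson_div_sub_le (hμ x) ht hs0 hs1 (hBmeas x) (hB1 x) (hB0 x)
      (hPmeas x) (hPnat x) (hPdist x) (hindep.indepFun Sum.inl_ne_inr)
  rw [integral_finsetSum (f := fun x ω ↦ |B x ω * P x ω / (s * t) - μ x|) Finset.univ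
    fun x _ ↦ (((hInt x).div_const (s * t)).sub (integrable_const (μ x))).abs]
  calc ∑ x, ∫ ω, |B x ω * P x ω / (s * t) - μ x| ∂Pr
      ≤ ∑ x, (2 * (1 - s) * μ x + s / √t * √(μ x)) := Finset.sum_le_sum fun x _ ↦ hsite x
    _ = 2 * (1 - s) * (∑ x, μ x) + s / √t * ∑ x, √(μ x) := by
        rw [Finset.sum_add_distrib, ← Finset.mul_sum, ← Finset.mul_sum]
end
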